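/- arXiv:2004.09671 — 4 statements merged into one kernel-verified Lean document; each statement's English description precedes it below -/
import Mathlib

section
/- Let M and A be abelian groups viewed as ℤ-modules, let α ∈ M, and let α̌ : M → ℤ be a ℤ-linear functional with α̌(α) = 2. Let q : M → A be a quadratic map that is invariant under the reflection s_α, i.e. q(λ − α̌(λ) • α) = q(λ) for all λ ∈ M. If moreover α = 2 • β for some β ∈ M (the coroot is twice a cocharacter), then the restricted condition holds automatically: κ(α, λ) = α̌(λ) • q(α) for all λ ∈ M, where κ denotes the polar form of q. -/
/-!
Expanding `q (λ - n • α) = q λ` with `n = α̌(λ)` only gives `n • (κ(α, λ) - n • q α) = 0`, which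
says nothing when `A` has torsion. Since `α̌(β) = 1`, the same identity at `λ + β` (together with
its instance at `β` itself, `κ(α, β) = q α`) gives `(n + 1) • (κ(α, λ) - n • q α) = 0`, and the
difference of the two identities is the claim.
-/

namespace QuadraticMap

variable {R M N : Type*} [CommRing R] [AddCommGroup M] [AddCommGroup N] [Module R M] [Module R N]

theorem smul_polar_sub_smul_eq_zero_of_map_sub_smul (Q : QuadraticMap R M N) {x y : M} {c : R}
    (h : Q (y - c • x) = Q y) : c • (polar Q x y - c • Q x) = 0 := by
  rw [sub_eq_add_neg, ← neg_smul, QuadraticMap.map_add Q, QuadraticMap.map_smul,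
    polar_smul_right, polar_comm] at h
  linear_combination (norm := module) -h

end QuadraticMap

/-- If a quadratic map `q : M → A` is invariant under the reflection
`s_α(λ) = λ - α̌(λ) • α` attached to `α ∈ M` and `α̌ : M →ₗ[ℤ] ℤ` with `α̌(α) = 2`,
and if moreover `α = 2 • β` for some `β ∈ M`, then the restricted condition
`κ(α, λ) = α̌(λ) • q(α)` holds automatically, where `κ` is the polar form of `q`. -/
theorem polar_eq_of_reflection_invariant_of_coroot_even
    (M A : Type*) [AddCommGroup M] [Module ℤ M] [AddCommGroup A] [Module ℤ A]
    (α : M) (αv : M →ₗ[ℤ] ℤ) (hα : αv α = 2)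
    (q : QuadraticMap ℤ M A)
    (hW : ∀ lam : M, q (lam - αv lam • α) = q lam)
    (β : M) (hβ : α = (2 : ℤ) • β) :
    ∀ lam : M, QuadraticMap.polar q α lam = αv lam • q α := by
  -- the statement's `•` is `zsmul`; replacing the given `ℤ`-module structures by the canonical
  -- ones makes it agree definitionally with the module scalar action
  obtain rfl : ‹Module ℤ M› = AddCommGroup.toIntModule M := Subsingleton.elim _ _
  obtain rfl : ‹Module ℤ A› = AddCommGroup.toIntModule A := Subsingleton.elim _ _
  have key (lam : M) : αv lam • (QuadraticMap.polar q α lam - αv lam • q α) = 0 :=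
    q.smul_polar_sub_smul_eq_zero_of_map_sub_smul (hW lam)
  have hβv : αv β = 1 := by
    rw [hβ, map_zsmul, smul_eq_mul] at hα
    omega
  have hqβ : QuadraticMap.polar q α β = q α := by
    simpa [hβv, sub_eq_zero] using key β
  intro lam
  have hshift := key (lam + β)
  rw [map_add, hβv, QuadraticMap.polar_add_right, hqβ] at hshift
  linear_combination (norm := module) hshift - key lam
end

section
/- Let M and A be abelian groups viewed as ℤ-modules, let (α_i)_{i ∈ ι} be a family of elements of M together with ℤ-linear functionals α̌_i : M → ℤ satisfying α̌_i(α_i) = 2, and let q : M → A be a quadratic map satisfying the restricted condition κ(α_i, λ) = α̌_i(λ) • q(α_i) for all i ∈ ι and λ ∈ M, where κ is the polar form of q. If q(α_i) = 0 for all i ∈ ι, then for every element μ of the subgroup of M generated by the α_i and every λ ∈ M one has κ(μ, λ) = 0, q(μ) = 0, and q(λ + μ) = q(λ); in other words, the subgroup generated by the α_i lies in the kernel of the polar form and q is invariant under translation by it (so q descends to the quotient). -/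
namespace QuadraticMap

variable {R M N : Type*} [CommRing R] [AddCommGroup M] [Module R M] [AddCommGroup N] [Module R N]
  {Q : QuadraticMap R M N}

theorem mem_radical_iff_polar {x : M} : x ∈ Q.radical ↔ Q x = 0 ∧ ∀ y, polar Q x y = 0 := by
  simp [radical, LinearMap.ext_iff]

theorem mem_radical_of_polar_eq_zsmul {x : M} (c : M → ℤ)
    (hpolar : ∀ y, polar Q x y = c y • Q x) (hx : Q x = 0) : x ∈ Q.radical :=
  mem_radical_iff_polar.2 ⟨hx, fun y => by rw [hpolar, hx, zsmul_zero]⟩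

end QuadraticMap

theorem quadraticMap_descends_of_vanishing_on_coroots_general
    (M A : Type*) [AddCommGroup M] [Module ℤ M] [AddCommGroup A] [Module ℤ A]
    (ι : Type*) (α : ι → M) (αv : ι → (M →ₗ[ℤ] ℤ))
    (q : QuadraticMap ℤ M A)
    (hrestr : ∀ i, ∀ lam : M, QuadraticMap.polar q (α i) lam = αv i lam • q (α i))
    (hzero : ∀ i, q (α i) = 0) :
    ∀ μ ∈ AddSubgroup.closure (Set.range α), ∀ lam : M,
      QuadraticMap.polar q μ lam = 0 ∧ q μ = 0 ∧ q (lam + μ) = q lam := by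
  have hle : AddSubgroup.closure (Set.range α) ≤ q.radical.toAddSubgroup :=
    AddSubgroup.closure_le _ |>.2 <| Set.range_subset_iff.2 fun i =>
      QuadraticMap.mem_radical_of_polar_eq_zsmul (αv i) (hrestr i) (hzero i)
  intro μ hμ lam
  obtain ⟨hq, hpolar⟩ := QuadraticMap.mem_radical_iff_polar.1 (hle hμ)
  exact ⟨hpolar lam, hq, add_comm lam μ ▸ (QuadraticMap.mem_radical_iff'.1 (hle hμ)).2 lam⟩

/-- Let `(α_i)` be a family of elements of `M` with linear functionals `α̌_i` satisfying
`α̌_i(α_i) = 2`, and let `q : M → A` be a quadratic map satisfying the restricted condition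
`κ(α_i, λ) = α̌_i(λ) • q(α_i)`.  If `q(α_i) = 0` for all `i`, then the subgroup generated by
the `α_i` lies in the kernel of the polar form `κ` and `q` is invariant under translation by
it, so `q` descends to the quotient. -/
theorem quadraticMap_descends_of_vanishing_on_coroots
    (M A : Type*) [AddCommGroup M] [Module ℤ M] [AddCommGroup A] [Module ℤ A]
    (ι : Type*) (α : ι → M) (αv : ι → (M →ₗ[ℤ] ℤ))
    (hα : ∀ i, αv i (α i) = 2)
    (q : QuadraticMap ℤ M A)
    (hrestr : ∀ i, ∀ lam : M, QuadraticMap.polar q (α i) lam = αv i lam • q (α i))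
    (hzero : ∀ i, q (α i) = 0) :
    ∀ μ ∈ AddSubgroup.closure (Set.range α), ∀ lam : M,
      QuadraticMap.polar q μ lam = 0 ∧ q μ = 0 ∧ q (lam + μ) = q lam :=
  quadraticMap_descends_of_vanishing_on_coroots_general M A ι α αv q hrestr hzero
end

section
/- Let M be a free ℤ-module of finite rank and A any abelian group viewed as a ℤ-module. Then the canonical additive map Q(M; ℤ) ⊗_ℤ A → Q(M; A), sending a pure tensor q ⊗ a to the quadratic map λ ↦ q(λ) • a, is bijective. -/
/-!
Fix a basis `b` of `M` indexed by a finite linearly ordered set. A quadratic map `Q : M → N` is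
determined by the values `Q (b i)` and `polar Q (b i) (b j)` for `i < j`, and these can be
prescribed freely (realize them by an upper triangular bilinear form). This identifies
`Q(M; N)` with `N ^ {(i, j) | i ≤ j}`, naturally in `N`, and under these identifications the map
`Q(M; ℤ) ⊗ A → Q(M; A)` becomes the isomorphism `ℤ ^ κ ⊗ A ≅ A ^ κ` for a finite set `κ`.
-/

open TensorProduct

/-- The canonical additive map `Q(M; ℤ) ⊗_ℤ A → Q(M; A)`, sending a pure tensor `q ⊗ a`
to the quadratic map `λ ↦ q(λ) • a`. -/
noncomputable def quadraticMapTensorLift (M A : Type*) [AddCommGroup M] [Module ℤ M]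
    [AddCommGroup A] :
    (QuadraticMap ℤ M ℤ) ⊗[ℤ] A →ₗ[ℤ] QuadraticMap ℤ M A :=
  TensorProduct.lift
    { toFun := fun q =>
        { toFun := fun a => (LinearMap.toSpanSingleton ℤ A a).compQuadraticMap q
          map_add' := fun a b => by
            ext lam
            show q lam • (a + b) = q lam • a + q lam • b
            exact smul_add _ _ _
          map_smul' := fun c a => by
            ext lam
            show q lam • (c • a) = c • (q lam • a)
            exact smul_comm _ _ _
          }
      map_add' := fun q₁ q₂ => by
        ext a lam
        show (q₁ lam + q₂ lam) • a = q₁ lam • a + q₂ lam • a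
        exact add_smul _ _ _
      map_smul' := fun c q => by
        ext a lam
        show (c • q lam) • a = c • (q lam • a)
        exact smul_assoc _ _ _ }

namespace QuadraticMap

section UpperTriangular

variable {ι R M N : Type*} [LinearOrder ι] [CommRing R] [AddCommGroup M] [Module R M]
  [AddCommGroup N] [Module R N]

theorem toBilin_compQuadraticMap {P : Type*} [AddCommGroup P] [Module R P] (f : N →ₗ[R] P)
    (Q : QuadraticMap R M N) (bm : Module.Basis ι R M) :
    (f.compQuadraticMap Q).toBilin bm = (Q.toBilin bm).compr₂ f := by
  refine bm.ext fun i => bm.ext fun j => ?_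
  have hfQ : ⇑(f.compQuadraticMap Q) = f ∘ Q := rfl
  simp only [toBilin_apply, LinearMap.compr₂_apply, apply_ite f, map_zero, hfQ, polar_comp,
    Function.comp_apply]

variable (N) in
noncomputable def toUpperTriangular (bm : Module.Basis ι R M) :
    QuadraticMap R M N →ₗ[R] ({p : ι × ι // p.1 ≤ p.2} → N) :=
  LinearMap.pi fun p =>
    LinearMap.applyₗ (bm p.1.2) ∘ₗ LinearMap.applyₗ (bm p.1.1) ∘ₗ toBilinHom R bm

theorem toUpperTriangular_apply (bm : Module.Basis ι R M) (Q : QuadraticMap R M N)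
    (p : {p : ι × ι // p.1 ≤ p.2}) :
    toUpperTriangular N bm Q p = Q.toBilin bm (bm p.1.1) (bm p.1.2) :=
  rfl

theorem toUpperTriangular_compQuadraticMap {P : Type*} [AddCommGroup P] [Module R P]
    (f : N →ₗ[R] P) (Q : QuadraticMap R M N) (bm : Module.Basis ι R M) :
    toUpperTriangular P bm (f.compQuadraticMap Q) = f ∘ toUpperTriangular N bm Q := by
  ext p
  simp [toUpperTriangular_apply, toBilin_compQuadraticMap]

theorem toUpperTriangular_injective (bm : Module.Basis ι R M) :
    Function.Injective (toUpperTriangular N bm) := by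
  refine (injective_iff_map_eq_zero _).2 fun Q hQ => ?_
  have hB : Q.toBilin bm = 0 := by
    refine bm.ext fun i => bm.ext fun j => ?_
    rcases le_or_gt i j with hij | hij
    · exact congrFun hQ ⟨(i, j), hij⟩
    · simp [toBilin_apply, hij.ne', hij.not_gt]
  rw [← toQuadraticMap_toBilin Q bm, hB, LinearMap.BilinMap.toQuadraticMap_zero]

theorem toUpperTriangular_surjective (bm : Module.Basis ι R M) :
    Function.Surjective (toUpperTriangular N bm) := by
  intro v
  let B : LinearMap.BilinMap R M N := bm.constr R fun i => bm.constr R fun j =>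
    if h : i ≤ j then v ⟨(i, j), h⟩ else 0
  have hB : ∀ i j, B (bm i) (bm j) = if h : i ≤ j then v ⟨(i, j), h⟩ else 0 := by
    simp [B]
  refine ⟨B.toQuadraticMap, funext fun ⟨(i, j), (hij : i ≤ j)⟩ => ?_⟩
  rcases hij.eq_or_lt with rfl | hlt
  · rw [toUpperTriangular_apply, toBilin_apply, if_pos rfl,
      LinearMap.BilinMap.toQuadraticMap_apply, hB, dif_pos le_rfl]
  · rw [toUpperTriangular_apply, toBilin_apply, if_neg hlt.ne, if_pos hlt,
      LinearMap.BilinMap.polar_toQuadraticMap, hB, hB, dif_pos hij, dif_neg hlt.not_ge, add_zero]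

variable (N) in
noncomputable def toUpperTriangularEquiv (bm : Module.Basis ι R M) :
    QuadraticMap R M N ≃ₗ[R] ({p : ι × ι // p.1 ≤ p.2} → N) :=
  LinearEquiv.ofBijective (toUpperTriangular N bm)
    ⟨toUpperTriangular_injective bm, toUpperTriangular_surjective bm⟩

end UpperTriangular

end QuadraticMap

open QuadraticMap

theorem toUpperTriangular_comp_quadraticMapTensorLift {ι M : Type*} (A : Type*) [LinearOrder ι]
    [Fintype ι] [AddCommGroup M] [Module ℤ M] [AddCommGroup A] (bm : Module.Basis ι ℤ M) :
    toUpperTriangular A bm ∘ₗ quadraticMapTensorLift M A =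
      (TensorProduct.comm ℤ _ A ≪≫ₗ piScalarRight ℤ ℤ A _).toLinearMap ∘ₗ
        (toUpperTriangular ℤ bm).rTensor A := by
  refine TensorProduct.ext' fun q a => ?_
  exact toUpperTriangular_compQuadraticMap (LinearMap.toSpanSingleton ℤ A a) q bm

/-- For a free `ℤ`-module `M` of finite rank and any abelian group `A`, the canonical
additive map `Q(M; ℤ) ⊗_ℤ A → Q(M; A)`, `q ⊗ a ↦ (λ ↦ q(λ) • a)`, is bijective. -/
theorem quadraticMapTensorLift_bijective (M A : Type*) [AddCommGroup M] [Module ℤ M]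
    [Module.Free ℤ M] [Module.Finite ℤ M] [AddCommGroup A] :
    Function.Bijective (quadraticMapTensorLift M A) := by
  let bm := Module.finBasis ℤ M
  rw [← (toUpperTriangularEquiv A bm).bijective.of_comp_iff']
  change Function.Bijective (toUpperTriangular A bm ∘ₗ quadraticMapTensorLift M A)
  rw [toUpperTriangular_comp_quadraticMapTensorLift]
  exact (TensorProduct.comm ℤ _ A ≪≫ₗ piScalarRight ℤ ℤ A _).bijective.comp
    ((toUpperTriangularEquiv ℤ bm).rTensor A).bijective
end

section
/- Let M be a free ℤ-module of finite rank and A a divisible abelian group. Then the abelian group Q(M; A) of A-valued quadratic maps on M is divisible: for every quadratic map q : M → A and every positive integer n there exists a quadratic map q' : M → A with n • q' = q. In particular every A-valued quadratic form on M admits a 'half', a quadratic map q' with 2 • q' = q. -/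
/-! Over a free module every quadratic map has the form `x ↦ B x x` for a bilinear map `B`, and a
linear map out of a free module is divided by `n` by dividing its values on a basis; applying this
twice divides `B`, hence the quadratic map. -/

theorem LinearMap.nsmul_surjective_of_free {R M N : Type*} [CommSemiring R] [AddCommMonoid M]
    [Module R M] [Module.Free R M] [AddCommMonoid N] [Module R N] {n : ℕ}
    (hN : Function.Surjective fun b : N => n • b) :
    Function.Surjective fun g : M →ₗ[R] N => n • g := by
  intro f
  obtain ⟨ι, b⟩ := Module.Free.exists_basis (R := R) (M := M)
  choose c hc using fun i => hN (f (b i))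
  exact ⟨b.constr R c, b.ext fun i => by simpa using hc i⟩

theorem QuadraticMap.nsmul_surjective_of_free {R M N : Type*} [CommRing R] [AddCommGroup M]
    [Module R M] [Module.Free R M] [AddCommGroup N] [Module R N] {n : ℕ}
    (hN : Function.Surjective fun b : N => n • b) :
    Function.Surjective fun q : QuadraticMap R M N => n • q := by
  intro q
  obtain ⟨B, rfl⟩ := LinearMap.BilinMap.toQuadraticMap_surjective q
  obtain ⟨B', rfl⟩ := LinearMap.nsmul_surjective_of_free (LinearMap.nsmul_surjective_of_free hN) B
  exact ⟨LinearMap.BilinMap.toQuadraticMap B',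
    (map_nsmul (LinearMap.BilinMap.toQuadraticMapAddMonoidHom R M) n B').symm⟩

theorem quadraticMap_divisible_of_divisible_general
    (M A : Type*) [AddCommGroup M] [Module ℤ M] [Module.Free ℤ M]
    [AddCommGroup A] [Module ℤ A]
    (hA : ∀ (a : A) (n : ℕ), 0 < n → ∃ b : A, n • b = a) :
    (∀ (q : QuadraticMap ℤ M A) (n : ℕ), 0 < n → ∃ q' : QuadraticMap ℤ M A, n • q' = q) ∧
    (∀ q : QuadraticMap ℤ M A, ∃ q' : QuadraticMap ℤ M A, 2 • q' = q) := by
  have divisible (q : QuadraticMap ℤ M A) (n : ℕ) (hn : 0 < n) :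
      ∃ q' : QuadraticMap ℤ M A, n • q' = q :=
    QuadraticMap.nsmul_surjective_of_free (fun a => hA a n hn) q
  exact ⟨divisible, fun q => divisible q 2 two_pos⟩

/-- For a lattice `M` and a divisible abelian group `A`, the group of `A`-valued
quadratic maps on `M` is divisible; in particular every `A`-valued quadratic form
admits a half. -/
theorem quadraticMap_divisible_of_divisible
    (M A : Type*) [AddCommGroup M] [Module ℤ M] [Module.Free ℤ M] [Module.Finite ℤ M]
    [AddCommGroup A] [Module ℤ A]
    (hA : ∀ (a : A) (n : ℕ), 0 < n → ∃ b : A, n • b = a) :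
    (∀ (q : QuadraticMap ℤ M A) (n : ℕ), 0 < n → ∃ q' : QuadraticMap ℤ M A, n • q' = q) ∧
    (∀ q : QuadraticMap ℤ M A, ∃ q' : QuadraticMap ℤ M A, 2 • q' = q) :=
  quadraticMap_divisible_of_divisible_general M A hA
end
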